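/- Let [a₁,…,a_r] and [b₁,…,b_s] be conjugate strings and let t ≥ 0 be an integer. Let N/A (in lowest terms, 0 < A < N) be the value of the string [a_r,…,a₁, t+2, b₁,…,b_s]. Then the string with value N/(N−A) is a T_{t+1}-string; that is, N/(N−A) = (t+1)m²/((t+1)mq − 1) for some integers m ≥ 2 and q with 1 ≤ q < m and gcd(q,m) = 1. -/

import Mathlib

/-!
Write `M(l)` for the product of the matrices `!![b, -1; 1, 0]` over `b ∈ l`. For a string, the
first column `(p, q)` of `M(l)` gives `hjValue l = p / q` in lowest terms (the determinant is `1`),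
and `M(l.reverse) = J M(l)ᵀ J` with `J = diag(1, -1)`. If `M(la) = !![n, c; a, s]`, conjugacy
forces the first column of `M(lb)` to be `(n, n - a)`, and multiplying out
`M(la.reverse) * M([t + 2]) * M(lb)` with `n s - a c = 1` gives `N = (t + 1) n²` and
`A = 1 - (t + 1) n c`. Hence `N - A = (t + 1) n q - 1` for `q = n + c`, and `1 ≤ q < n` because
`(n, -c)` is the first column of `M(la.reverse)`, again a string.
-/

/-- The value of the Hirzebruch–Jung continued fraction
`[b₁,…,b_r] = b₁ − 1/(b₂ − 1/(⋯ − 1/b_r))`.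
(For the empty list we set the value to `0`; since `1/0 = 0` in `ℚ`, the
recursion then gives the correct value `b_r` for singleton lists.) -/
def hjValue : List ℤ → ℚ
  | [] => 0
  | b :: l => (b : ℚ) - 1 / hjValue l

def IsString (l : List ℤ) : Prop := l ≠ [] ∧ ∀ b ∈ l, 2 ≤ b

def Conjugate (l l' : List ℤ) : Prop :=
  ∃ n a : ℤ, 0 < a ∧ a < n ∧ IsCoprime a n ∧
    hjValue l = (n : ℚ) / (a : ℚ) ∧ hjValue l' = (n : ℚ) / ((n : ℚ) - (a : ℚ))

open Matrix

def hjGen (b : ℤ) : Matrix (Fin 2) (Fin 2) ℤ := !![b, -1; 1, 0]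

def hjMatrix (l : List ℤ) : Matrix (Fin 2) (Fin 2) ℤ := (l.map hjGen).prod

@[simp]
lemma hjMatrix_nil : hjMatrix [] = 1 := rfl

lemma hjMatrix_cons (b : ℤ) (l : List ℤ) : hjMatrix (b :: l) = hjGen b * hjMatrix l := by
  simp [hjMatrix]

lemma hjMatrix_append (u v : List ℤ) : hjMatrix (u ++ v) = hjMatrix u * hjMatrix v := by
  simp [hjMatrix]

lemma det_hjMatrix (l : List ℤ) : (hjMatrix l).det = 1 := by
  induction l with
  | nil => simp
  | cons b l ih => rw [hjMatrix_cons, det_mul, ih, hjGen, det_fin_two_of]; ring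

lemma hjMatrix_det_fin_two (l : List ℤ) :
    hjMatrix l 0 0 * hjMatrix l 1 1 - hjMatrix l 0 1 * hjMatrix l 1 0 = 1 :=
  (det_fin_two (hjMatrix l)).symm.trans (det_hjMatrix l)

lemma hjMatrix_cons_apply_zero_zero (b : ℤ) (l : List ℤ) :
    hjMatrix (b :: l) 0 0 = b * hjMatrix l 0 0 - hjMatrix l 1 0 := by
  simp [hjMatrix_cons, hjGen, mul_apply, Fin.sum_univ_two, sub_eq_add_neg]

lemma hjMatrix_cons_apply_one_zero (b : ℤ) (l : List ℤ) :
    hjMatrix (b :: l) 1 0 = hjMatrix l 0 0 := by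
  simp [hjMatrix_cons, hjGen, mul_apply, Fin.sum_univ_two]

lemma hjMatrix_reverse (l : List ℤ) :
    hjMatrix l.reverse = !![1, 0; 0, -1] * (hjMatrix l)ᵀ * !![1, 0; 0, -1] := by
  induction l with
  | nil => ext i j; fin_cases i <;> fin_cases j <;> rfl
  | cons b l ih =>
    have hgen : !![1, 0; 0, -1] * hjGen b = (hjGen b)ᵀ * !![(1 : ℤ), 0; 0, -1] := by
      ext i j; fin_cases i <;> fin_cases j <;> simp [hjGen, mul_apply, Fin.sum_univ_two]
    rw [List.reverse_cons, hjMatrix_append, ih, hjMatrix_cons b l, transpose_mul,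
      hjMatrix_cons, hjMatrix_nil, Matrix.mul_one]
    simp only [Matrix.mul_assoc, hgen]

lemma hjMatrix_reverse_apply_zero_zero (l : List ℤ) :
    hjMatrix l.reverse 0 0 = hjMatrix l 0 0 := by
  simp [hjMatrix_reverse, mul_apply, Fin.sum_univ_two, vecMul, dotProduct]

lemma hjMatrix_reverse_apply_one_zero (l : List ℤ) :
    hjMatrix l.reverse 1 0 = -hjMatrix l 0 1 := by
  simp [hjMatrix_reverse, mul_apply, Fin.sum_univ_two, vecMul, dotProduct]

lemma isCoprime_hjMatrix_col_zero (l : List ℤ) : IsCoprime (hjMatrix l 0 0) (hjMatrix l 1 0) :=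
  ⟨hjMatrix l 1 1, -hjMatrix l 0 1, by linear_combination hjMatrix_det_fin_two l⟩

lemma hjMatrix_col_zero_bounds_and_value {l : List ℤ} (hl : ∀ b ∈ l, 2 ≤ b) :
    0 ≤ hjMatrix l 1 0 ∧ hjMatrix l 1 0 < hjMatrix l 0 0 ∧
      hjValue l = (hjMatrix l 0 0 : ℚ) / hjMatrix l 1 0 := by
  induction l with
  | nil => simp [hjValue]
  | cons b l ih =>
    obtain ⟨hq, hqp, hv⟩ := ih fun x hx => hl x (List.mem_cons_of_mem _ hx)
    have hb : 2 ≤ b := hl b List.mem_cons_self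
    rw [hjMatrix_cons_apply_zero_zero, hjMatrix_cons_apply_one_zero]
    refine ⟨by linarith, by nlinarith, ?_⟩
    have hp : (hjMatrix l 0 0 : ℚ) ≠ 0 := by exact_mod_cast (hq.trans_lt hqp).ne'
    rw [hjValue, hv, one_div_div]
    push_cast
    field_simp

namespace IsString

lemma reverse {l : List ℤ} (hl : IsString l) : IsString l.reverse :=
  ⟨by simpa using hl.1, fun b hb => hl.2 b (List.mem_reverse.mp hb)⟩

lemma one_le_hjMatrix_one_zero {l : List ℤ} (hl : IsString l) : 1 ≤ hjMatrix l 1 0 := by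
  obtain ⟨hne, h2⟩ := hl
  obtain ⟨b, l, rfl⟩ := List.exists_cons_of_ne_nil hne
  obtain ⟨hq, hqp, -⟩ :=
    hjMatrix_col_zero_bounds_and_value fun x hx => h2 x (List.mem_cons_of_mem _ hx)
  rw [hjMatrix_cons_apply_one_zero]
  linarith

lemma hjMatrix_one_zero_lt {l : List ℤ} (hl : IsString l) : hjMatrix l 1 0 < hjMatrix l 0 0 :=
  (hjMatrix_col_zero_bounds_and_value hl.2).2.1

lemma one_le_neg_hjMatrix_zero_one {l : List ℤ} (hl : IsString l) : 1 ≤ -hjMatrix l 0 1 := by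
  simpa [hjMatrix_reverse_apply_one_zero] using hl.reverse.one_le_hjMatrix_one_zero

lemma neg_hjMatrix_zero_one_lt {l : List ℤ} (hl : IsString l) :
    -hjMatrix l 0 1 < hjMatrix l 0 0 := by
  simpa [hjMatrix_reverse_apply_one_zero, hjMatrix_reverse_apply_zero_zero] using
    hl.reverse.hjMatrix_one_zero_lt

lemma hjMatrix_col_zero_eq {l : List ℤ} (hl : IsString l) {x y : ℤ} (hy : 0 < y)
    (hxy : IsCoprime x y) (h : hjValue l = (x : ℚ) / y) :
    hjMatrix l 0 0 = x ∧ hjMatrix l 1 0 = y := by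
  refine Rat.div_int_inj (lt_of_lt_of_le one_pos hl.one_le_hjMatrix_one_zero) hy ?_ ?_ ?_
  · exact Int.isCoprime_iff_gcd_eq_one.mp (isCoprime_hjMatrix_col_zero l)
  · exact Int.isCoprime_iff_gcd_eq_one.mp hxy
  · rw [← (hjMatrix_col_zero_bounds_and_value hl.2).2.2, h]

lemma append_cons {u v : List ℤ} {b : ℤ} (hu : ∀ x ∈ u, 2 ≤ x) (hb : 2 ≤ b)
    (hv : ∀ x ∈ v, 2 ≤ x) : IsString (u ++ b :: v) := by
  refine ⟨by simp, fun x hx => ?_⟩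
  rcases List.mem_append.mp hx with hx | hx | ⟨_, hx⟩
  exacts [hu x hx, hb, hv x hx]

end IsString

lemma Conjugate.exists_hjMatrix_col_zero {la lb : List ℤ} (hla : IsString la)
    (hlb : IsString lb) (h : Conjugate la lb) :
    ∃ n a : ℤ, hjMatrix la 0 0 = n ∧ hjMatrix la 1 0 = a ∧
      hjMatrix lb 0 0 = n ∧ hjMatrix lb 1 0 = n - a := by
  obtain ⟨n, a, ha, han, hcop, hvla, hvlb⟩ := h
  have hcop' : IsCoprime n (n - a) := by
    obtain ⟨u, v, huv⟩ := hcop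
    exact ⟨u + v, -u, by linear_combination huv⟩
  obtain ⟨hna, haa⟩ := hla.hjMatrix_col_zero_eq ha hcop.symm hvla
  obtain ⟨hnb, hab⟩ :=
    hlb.hjMatrix_col_zero_eq (sub_pos.mpr han) hcop' (by rw [hvlb]; push_cast; rfl)
  exact ⟨n, a, hna, haa, hnb, hab⟩

lemma hjMatrix_reverse_append_cons_col_zero {la lb : List ℤ} (b : ℤ) {n a : ℤ}
    (hna : hjMatrix la 0 0 = n) (haa : hjMatrix la 1 0 = a)
    (hnb : hjMatrix lb 0 0 = n) (hab : hjMatrix lb 1 0 = n - a) :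
    hjMatrix (la.reverse ++ b :: lb) 0 0 = (b - 1) * n ^ 2 ∧
      hjMatrix (la.reverse ++ b :: lb) 1 0 = 1 - (b - 1) * n * hjMatrix la 0 1 := by
  have hdet := hjMatrix_det_fin_two la
  rw [hjMatrix_append, hjMatrix_reverse, hjMatrix_cons]
  simp only [mul_apply, Fin.sum_univ_two, hjGen, transpose_apply, of_apply, cons_val',
    cons_val_zero, cons_val_one, cons_val_fin_one, hna, haa, hnb, hab]
  rw [hna, haa] at hdet
  constructor
  · ring
  · linear_combination hdet

theorem stmt_17_general (la lb : List ℤ) (hla : IsString la) (hlb : IsString lb)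
    (hconj : Conjugate la lb) (t : ℕ) (N A : ℤ)
    (hA : 0 < A) (hcop : IsCoprime A N)
    (hval : hjValue (la.reverse ++ ((t : ℤ) + 2) :: lb) = (N : ℚ) / (A : ℚ)) :
    ∃ m q : ℤ, 2 ≤ m ∧ 1 ≤ q ∧ q < m ∧ IsCoprime q m ∧
      (N : ℚ) / ((N : ℚ) - (A : ℚ)) =
        ((((t : ℤ) + 1) * m ^ 2 : ℤ) : ℚ) / ((((t : ℤ) + 1) * m * q - 1 : ℤ) : ℚ) := by
  obtain ⟨n, a, hna, haa, hnb, hab⟩ := hconj.exists_hjMatrix_col_zero hla hlb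
  have hL : IsString (la.reverse ++ ((t : ℤ) + 2) :: lb) :=
    .append_cons hla.reverse.2 (by omega) hlb.2
  obtain ⟨hLN, hLA⟩ := hL.hjMatrix_col_zero_eq hA hcop.symm hval
  obtain ⟨hLN', hLA'⟩ := hjMatrix_reverse_append_cons_col_zero ((t : ℤ) + 2) hna haa hnb hab
  set c := hjMatrix la 0 1
  have hc₁ : 1 ≤ -c := hla.one_le_neg_hjMatrix_zero_one
  have hc₂ : -c < n := hna ▸ hla.neg_hjMatrix_zero_one_lt
  have hdet := hjMatrix_det_fin_two la
  rw [hna, haa] at hdet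
  refine ⟨n, n + c, by omega, by omega, by omega,
    ⟨-a, a + hjMatrix la 1 1, by linear_combination hdet⟩, ?_⟩
  rw [← hLN, ← hLA, hLN', hLA']
  push_cast
  ring

/-- Let `[a₁,…,a_r]` and `[b₁,…,b_s]` be conjugate strings and `t ≥ 0`. If the
string `[a_r,…,a₁, t+2, b₁,…,b_s]` has value `N/A` in lowest terms
(`0 < A < N`), then the string with value `N/(N−A)` is a `T_{t+1}`-string,
i.e. `N/(N−A) = (t+1)m²/((t+1)mq − 1)` for some `m ≥ 2` and `1 ≤ q < m` with
`gcd(q,m) = 1`. -/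
theorem stmt_17 (la lb : List ℤ) (hla : IsString la) (hlb : IsString lb)
    (hconj : Conjugate la lb) (t : ℕ) (N A : ℤ)
    (hA : 0 < A) (hAN : A < N) (hcop : IsCoprime A N)
    (hval : hjValue (la.reverse ++ ((t : ℤ) + 2) :: lb) = (N : ℚ) / (A : ℚ)) :
    ∃ m q : ℤ, 2 ≤ m ∧ 1 ≤ q ∧ q < m ∧ IsCoprime q m ∧
      (N : ℚ) / ((N : ℚ) - (A : ℚ)) =
        ((((t : ℤ) + 1) * m ^ 2 : ℤ) : ℚ) / ((((t : ℤ) + 1) * m * q - 1 : ℤ) : ℚ) :=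
  stmt_17_general la lb hla hlb hconj t N A hA hcop hval
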